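/- arXiv:1104.5643 — 4 statements merged into one kernel-verified Lean document; each statement's English description precedes it below -/
import Mathlib

section
/- For integers 0 < a < b, k ≥ 1, a real δ with 0 < δ < 1/2, and x ∈ (δ, 1-δ), one has |P(B_{k,x} mod b ∈ {0,1,...,a-1}) - a/b| ≤ (1 - x^b(1-x)^b)^{⌊k/b⌋}, where B_{k,x} is a binomial random variable with parameters (k,x). -/
/-!
The residue of `B_{k,x}` modulo `b` is the lazy walk on `ZMod b` after `k` steps, whose law is
`T ^ k δ₀` for the transition operator `T = x • shift + (1 - x) • 1`; the powers of `T` expand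
binomially. In `b` steps the walk reaches every residue with probability at least
`c = x ^ b * (1 - x) ^ b` (Doeblin's minorisation), so if a distribution is bounded below by
`(1 - D) / b` then its image under `T ^ b` is bounded below by `(1 - (1 - b c) D) / b`. After
`⌊k / b⌋` such blocks the law is within `(1 - b c) ^ ⌊k / b⌋ ≤ (1 - c) ^ ⌊k / b⌋` of the uniform
distribution on every set of residues.
-/

open Finset

noncomputable def binomWeight (n : ℕ) (x : ℝ) (j : ℕ) : ℝ := n.choose j * x ^ j * (1 - x) ^ (n - j)

section BinomWeight

variable {x : ℝ}

lemma binomWeight_nonneg (hx0 : 0 ≤ x) (hx1 : x ≤ 1) (n j : ℕ) : 0 ≤ binomWeight n x j := by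
  have : 0 ≤ 1 - x := by linarith
  unfold binomWeight
  positivity

lemma sum_binomWeight (n : ℕ) (x : ℝ) : ∑ j ∈ range (n + 1), binomWeight n x j = 1 := by
  have h := (add_pow x (1 - x) n).symm
  rw [add_sub_cancel, one_pow] at h
  rw [← h]
  exact sum_congr rfl fun j _ => by unfold binomWeight; ring

lemma pow_mul_one_sub_pow_le_binomWeight (hx0 : 0 ≤ x) (hx1 : x ≤ 1) {n j : ℕ} (hj : j ≤ n) :
    x ^ n * (1 - x) ^ n ≤ binomWeight n x j := by
  have hx1' : 0 ≤ 1 - x := by linarith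
  have hchoose : (1 : ℝ) ≤ n.choose j := by exact_mod_cast Nat.choose_pos hj
  calc x ^ n * (1 - x) ^ n ≤ 1 * (x ^ j * (1 - x) ^ (n - j)) := by
        rw [one_mul]
        exact mul_le_mul (pow_le_pow_of_le_one hx0 hx1 hj)
          (pow_le_pow_of_le_one hx1' (by linarith) (Nat.sub_le n j)) (by positivity) (by positivity)
    _ ≤ binomWeight n x j := by
        rw [binomWeight, mul_assoc]
        gcongr

lemma natCast_mul_pow_mul_one_sub_pow_le_one (hx0 : 0 ≤ x) (hx1 : x ≤ 1) (n : ℕ) :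
    n * (x ^ n * (1 - x) ^ n) ≤ 1 :=
  calc (n : ℝ) * (x ^ n * (1 - x) ^ n) = ∑ _j ∈ range n, x ^ n * (1 - x) ^ n := by simp
    _ ≤ ∑ j ∈ range n, binomWeight n x j :=
        sum_le_sum fun j hj => pow_mul_one_sub_pow_le_binomWeight hx0 hx1 (mem_range.1 hj).le
    _ ≤ ∑ j ∈ range (n + 1), binomWeight n x j :=
        sum_le_sum_of_subset_of_nonneg (range_subset_range.2 n.le_succ)
          fun j _ _ => binomWeight_nonneg hx0 hx1 n j
    _ = 1 := sum_binomWeight n x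

end BinomWeight

lemma ZMod.card_filter_val_lt {a b : ℕ} [NeZero b] (h : a ≤ b) : #{y : ZMod b | y.val < a} = a := by
  obtain ⟨n, rfl⟩ := Nat.exists_eq_succ_of_ne_zero (NeZero.ne b)
  have := @Fin.card_filter_val_lt (n + 1) a
  rwa [min_eq_right h] at this

lemma ZMod.sum_range_natCast {b : ℕ} [NeZero b] (f : ZMod b → ℝ) :
    ∑ j ∈ range b, f j = ∑ y, f y :=
  sum_nbij' (fun j => (j : ZMod b)) (fun y => y.val) (fun _ _ => mem_univ _)
    (fun y _ => mem_range.2 y.val_lt) (fun _ hj => ZMod.val_cast_of_lt (mem_range.1 hj))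
    (fun y _ => ZMod.natCast_zmod_val y) (fun _ _ => rfl)

section LazyStep

variable {b : ℕ} {x : ℝ}

noncomputable def shift (b : ℕ) : Module.End ℝ (ZMod b → ℝ) := LinearMap.funLeft ℝ ℝ (· - 1)

lemma shift_pow_apply (j : ℕ) (p : ZMod b → ℝ) (y : ZMod b) : (shift b ^ j) p y = p (y - j) := by
  induction j generalizing p with
  | zero => simp
  | succ j ih =>
    rw [pow_succ, Module.End.mul_apply, ih, shift, LinearMap.funLeft_apply]
    push_cast
    ring_nf

/-- The transition operator, acting on distributions, of the lazy walk on `ZMod b` that moves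
from `y` to `y + 1` with probability `x`. -/
noncomputable def lazyStep (b : ℕ) (x : ℝ) : Module.End ℝ (ZMod b → ℝ) := x • shift b + (1 - x) • 1

lemma lazyStep_pow_apply (m : ℕ) (p : ZMod b → ℝ) (y : ZMod b) :
    (lazyStep b x ^ m) p y = ∑ j ∈ range (m + 1), binomWeight m x j * p (y - j) := by
  have hcomm : Commute (x • shift b) ((1 - x) • (1 : Module.End ℝ (ZMod b → ℝ))) :=
    ((Commute.one_right _).smul_right _).smul_left _
  rw [lazyStep, hcomm.add_pow, LinearMap.sum_apply, Finset.sum_apply]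
  refine sum_congr rfl fun j _ => ?_
  simp only [smul_pow, one_pow, Module.End.mul_apply, LinearMap.smul_apply, Module.End.one_apply,
    Module.End.natCast_apply, Pi.smul_apply, shift_pow_apply, smul_eq_mul, nsmul_eq_mul,
    Pi.mul_apply, Pi.natCast_apply]
  rw [binomWeight]
  ring

lemma sum_lazyStep_pow_apply [NeZero b] (m : ℕ) (p : ZMod b → ℝ) :
    ∑ y, (lazyStep b x ^ m) p y = ∑ y, p y := by
  have hshift (z : ZMod b) : ∑ y, p (y - z) = ∑ y, p y := (Equiv.subRight z).sum_comp p
  simp_rw [lazyStep_pow_apply]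
  rw [sum_comm]
  simp_rw [← mul_sum, hshift, ← sum_mul, sum_binomWeight, one_mul]

lemma le_lazyStep_pow_apply (hx0 : 0 ≤ x) (hx1 : x ≤ 1) {p : ZMod b → ℝ} {L : ℝ}
    (hp : ∀ y, L ≤ p y) (m : ℕ) (y : ZMod b) : L ≤ (lazyStep b x ^ m) p y := by
  rw [lazyStep_pow_apply]
  calc L = ∑ j ∈ range (m + 1), binomWeight m x j * L := by rw [← sum_mul, sum_binomWeight, one_mul]
    _ ≤ _ := sum_le_sum fun j _ => mul_le_mul_of_nonneg_left (hp _) (binomWeight_nonneg hx0 hx1 m j)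

lemma lazyStep_pow_self_apply_ge [NeZero b] (hx0 : 0 ≤ x) (hx1 : x ≤ 1) {p : ZMod b → ℝ} {L : ℝ}
    (hp : ∀ y, L ≤ p y) (hsum : ∑ y, p y = 1) (y : ZMod b) :
    x ^ b * (1 - x) ^ b + (1 - b * (x ^ b * (1 - x) ^ b)) * L ≤ (lazyStep b x ^ b) p y := by
  set c := x ^ b * (1 - x) ^ b
  have hshift : ∑ j ∈ range b, p (y - j) = 1 := by
    rw [ZMod.sum_range_natCast (fun z => p (y - z))]
    exact ((Equiv.subLeft y).sum_comp p).trans hsum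
  have hdrop : ∑ j ∈ range b, binomWeight b x j * (p (y - j) - L)
      ≤ ∑ j ∈ range (b + 1), binomWeight b x j * (p (y - j) - L) :=
    sum_le_sum_of_subset_of_nonneg (range_subset_range.2 b.le_succ)
      fun j _ _ => mul_nonneg (binomWeight_nonneg hx0 hx1 b j) (sub_nonneg.2 (hp _))
  calc c + (1 - b * c) * L = L + ∑ j ∈ range b, c * (p (y - j) - L) := by
        rw [← mul_sum, sum_sub_distrib, hshift, sum_const, card_range, nsmul_eq_mul]; ring
    _ ≤ L + ∑ j ∈ range b, binomWeight b x j * (p (y - j) - L) := by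
        gcongr with j hj
        · exact sub_nonneg.2 (hp _)
        · exact pow_mul_one_sub_pow_le_binomWeight hx0 hx1 (mem_range.1 hj).le
    _ ≤ ∑ j ∈ range (b + 1), binomWeight b x j * L
          + ∑ j ∈ range (b + 1), binomWeight b x j * (p (y - j) - L) := by
        rw [← sum_mul, sum_binomWeight, one_mul]; linarith
    _ = (lazyStep b x ^ b) p y := by
        rw [lazyStep_pow_apply, ← sum_add_distrib]
        exact sum_congr rfl fun j _ => by ring

lemma lazyStep_pow_mul_apply_ge [NeZero b] (hx0 : 0 ≤ x) (hx1 : x ≤ 1) {p : ZMod b → ℝ}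
    (hp : ∀ y, 0 ≤ p y) (hsum : ∑ y, p y = 1) (m : ℕ) (y : ZMod b) :
    (1 - (1 - b * (x ^ b * (1 - x) ^ b)) ^ m) / b ≤ (lazyStep b x ^ (b * m)) p y := by
  induction m generalizing y with
  | zero => simpa using hp y
  | succ m ih =>
    have hb : (b : ℝ) ≠ 0 := Nat.cast_ne_zero.2 (NeZero.ne b)
    rw [show b * (m + 1) = b + b * m by ring, pow_add (lazyStep b x), Module.End.mul_apply]
    refine le_trans (le_of_eq ?_) (lazyStep_pow_self_apply_ge hx0 hx1 ih
      ((sum_lazyStep_pow_apply _ p).trans hsum) y)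
    field_simp
    ring

lemma sum_lazyStep_pow_single_zero (k : ℕ) (s : Finset (ZMod b)) :
    ∑ y ∈ s, (lazyStep b x ^ k) (Pi.single 0 1) y
      = ∑ i ∈ (range (k + 1)).filter (fun i : ℕ => (i : ZMod b) ∈ s), binomWeight k x i := by
  simp_rw [lazyStep_pow_apply, Pi.single_apply, sub_eq_zero, mul_ite, mul_one, mul_zero]
  rw [sum_comm, sum_filter]
  exact sum_congr rfl fun i _ => sum_ite_eq' s _ _

end LazyStep

lemma abs_sum_sub_card_div_le {ι : Type*} [Fintype ι] {p : ι → ℝ} {D : ℝ}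
    (hp : ∀ i, (1 - D) / Fintype.card ι ≤ p i) (hsum : ∑ i, p i = 1) (s : Finset ι) :
    |∑ i ∈ s, p i - #s / Fintype.card ι| ≤ D := by
  classical
  have hn : (0 : ℝ) < Fintype.card ι := by
    have : Nonempty ι := by
      by_contra h
      simp [not_nonempty_iff.1 h] at hsum
    exact_mod_cast Fintype.card_pos
  have hs : (#s : ℝ) ≤ Fintype.card ι := by exact_mod_cast card_le_univ s
  set n := (Fintype.card ι : ℝ)
  have hmass (t : Finset ι) : #t / n * (1 - D) ≤ ∑ i ∈ t, p i :=
    calc #t / n * (1 - D) = ∑ i ∈ t, (1 - D) / n := by rw [sum_const, nsmul_eq_mul]; ring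
      _ ≤ ∑ i ∈ t, p i := sum_le_sum fun i _ => hp i
  have hD : 0 ≤ D := by
    have := hmass univ
    rw [card_univ, div_self hn.ne', hsum] at this
    linarith
  have hσ0 : 0 ≤ #s / n := by positivity
  have hσ1 : #s / n ≤ 1 := div_le_one_of_le₀ hs hn.le
  have hcompl := hmass sᶜ
  rw [card_compl, Nat.cast_sub (card_le_univ s), sub_div, div_self hn.ne'] at hcompl
  have htotal := sum_add_sum_compl s p
  rw [abs_le]
  constructor <;> nlinarith [hmass s, mul_nonneg hσ0 hD, mul_nonneg (sub_nonneg.2 hσ1) hD]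

theorem stmt_3_general (a b k : ℕ) (hab : a < b)
    (δ : ℝ) (hδ : 0 < δ) (x : ℝ) (hx : x ∈ Set.Ioo δ (1-δ)) :
    |(∑ i ∈ (Finset.range (k+1)).filter (fun i => i % b < a),
        (k.choose i : ℝ) * x^i * (1-x)^(k-i)) - a/b|
      ≤ (1 - x^b * (1-x)^b) ^ (k / b) := by
  have hx0 : 0 ≤ x := by linarith [hx.1]
  have hx1 : x ≤ 1 := by linarith [hx.2]
  have : NeZero b := ⟨by omega⟩
  set c := x ^ b * (1 - x) ^ b
  set s : Finset (ZMod b) := {y | y.val < a}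
  have hfilter :
      {i ∈ range (k + 1) | i % b < a} = (range (k + 1)).filter (fun i : ℕ => (i : ZMod b) ∈ s) :=
    filter_congr fun i _ => by simp [s, ZMod.val_natCast]
  set q := (lazyStep b x ^ (k % b)) (Pi.single 0 1)
  have hq : ∀ y, 0 ≤ q y := le_lazyStep_pow_apply hx0 hx1 (Pi.single_nonneg.2 zero_le_one) _
  have hq_sum : ∑ y, q y = 1 := by simp [q, sum_lazyStep_pow_apply]
  have hsplit : lazyStep b x ^ k = lazyStep b x ^ (b * (k / b)) * lazyStep b x ^ (k % b) := by
    rw [← pow_add, Nat.div_add_mod]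
  have hcb : c ≤ b * c :=
    le_mul_of_one_le_left (by positivity) (by exact_mod_cast (by omega : 1 ≤ b))
  have hbc : b * c ≤ 1 := natCast_mul_pow_mul_one_sub_pow_le_one hx0 hx1 b
  calc _ = |∑ y ∈ s, (lazyStep b x ^ k) (Pi.single 0 1) y - #s / Fintype.card (ZMod b)| := by
        rw [sum_lazyStep_pow_single_zero, ← hfilter, ZMod.card, ZMod.card_filter_val_lt hab.le]
        rfl
    _ ≤ (1 - b * c) ^ (k / b) := by
        refine abs_sum_sub_card_div_le (fun y => ?_) ?_ s
        · rw [ZMod.card, hsplit, Module.End.mul_apply]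
          exact lazyStep_pow_mul_apply_ge hx0 hx1 hq hq_sum _ y
        · rw [sum_lazyStep_pow_apply]; simp
    _ ≤ (1 - c) ^ (k / b) := pow_le_pow_left₀ (by linarith) (by linarith) _

theorem stmt_3 (a b k : ℕ) (ha : 0 < a) (hab : a < b) (hk : 1 ≤ k)
    (δ : ℝ) (hδ : 0 < δ) (hδ' : δ < 1/2) (x : ℝ) (hx : x ∈ Set.Ioo δ (1-δ)) :
    |(∑ i ∈ (Finset.range (k+1)).filter (fun i => i % b < a),
        (k.choose i : ℝ) * x^i * (1-x)^(k-i)) - a/b|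
      ≤ (1 - x^b * (1-x)^b) ^ (k / b) :=
  stmt_3_general a b k hab δ hδ x hx
end

section
/- For any 0 < δ < 1/2 and integers 0 < a < b, there exists λ > 0 such that for every integer k ≥ 1 and every x ∈ (δ, 1-δ), |P(B_{k,x} mod b ∈ {0,1,...,a-1}) - a/b| ≤ e^{-λk}. -/
/-!
Roots-of-unity filter: for a primitive `b`-th root of unity `ζ`,
`b · P(B_{k,x} mod b < a) = ∑_{j<b} (∑_{r<a} ζ^{-jr}) (x ζ^j + 1 - x)^k`.
The term `j = 0` equals `a`, and for `0 < j < b` we have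
`|x ζ^j + 1 - x|² = 1 - x(1-x)|1 - ζ^j|²`, which is bounded away from `1` uniformly for
`δ < x < 1 - δ`; so the error decays like `ρ^k` with `ρ < 1`. Since both the probability and
`a/b` lie in `[0, 1]` and `0 < a/b < 1`, the error is also at most `max (a/b) (1 - a/b) < 1`,
which takes care of the finitely many small `k` and yields a single rate `λ`.
-/

open Finset

/-- `P(B_{k,x} mod b < a)` for a binomial random variable `B_{k,x}`. -/
def binomialResidueMass {R : Type*} [CommRing R] (b a k : ℕ) (x : R) : R :=
  ∑ i ∈ (range (k + 1)).filter (fun i => i % b < a), (k.choose i : R) * x ^ i * (1 - x) ^ (k - i)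

namespace IsPrimitiveRoot

variable {K : Type*} [Field K] {ζ : K} {b : ℕ}

theorem geom_sum_pow_div_pow (hζ : IsPrimitiveRoot ζ b) {r : ℕ} (hr : r < b) (i : ℕ) :
    ∑ j ∈ range b, (ζ ^ i / ζ ^ r) ^ j = if i % b = r then (b : K) else 0 := by
  have hb : b ≠ 0 := by omega
  have hζr : ζ ^ r ≠ 0 := pow_ne_zero r (hζ.ne_zero hb)
  have hone : ζ ^ i / ζ ^ r = 1 ↔ i % b = r := by
    rw [div_eq_one_iff_eq hζr, (hζ.isOfFinOrder hb).pow_inj_mod, ← hζ.eq_orderOf,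
      Nat.mod_eq_of_lt hr]
  split_ifs with h
  · simp [hone.2 h]
  · have hpow : (ζ ^ i / ζ ^ r) ^ b = 1 := by
      rw [div_pow, ← pow_mul, ← pow_mul, mul_comm i, mul_comm r, pow_mul, pow_mul,
        hζ.pow_eq_one, one_pow, one_pow, div_one]
    rw [geom_sum_eq (mt hone.1 h), hpow, sub_self, zero_div]

theorem mul_sum_filter_mod_lt (hζ : IsPrimitiveRoot ζ b) {a : ℕ} (hab : a ≤ b)
    (s : Finset ℕ) (f : ℕ → K) :
    b * ∑ i ∈ s with i % b < a, f i =
      ∑ j ∈ range b, (∑ r ∈ range a, ((ζ ^ j) ^ r)⁻¹) * ∑ i ∈ s, f i * (ζ ^ j) ^ i := by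
  have indicator (i : ℕ) :
      (if i % b < a then (b : K) else 0) = ∑ r ∈ range a, ∑ j ∈ range b, (ζ ^ i / ζ ^ r) ^ j := by
    rw [sum_congr rfl fun r hr => hζ.geom_sum_pow_div_pow ((mem_range.1 hr).trans_le hab) i,
      sum_ite_eq, if_congr mem_range rfl rfl]
  calc (b : K) * ∑ i ∈ s with i % b < a, f i
      = ∑ i ∈ s, f i * if i % b < a then (b : K) else 0 := by
        rw [sum_filter, mul_sum]
        exact sum_congr rfl fun i _ => by split_ifs <;> ring
    _ = ∑ i ∈ s, ∑ r ∈ range a, ∑ j ∈ range b, f i * (ζ ^ i / ζ ^ r) ^ j := by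
        simp_rw [indicator, mul_sum]
    _ = ∑ j ∈ range b, ∑ r ∈ range a, ∑ i ∈ s, ((ζ ^ j) ^ r)⁻¹ * (f i * (ζ ^ j) ^ i) := by
        rw [sum_comm]
        refine (sum_congr rfl fun r _ => sum_comm).trans sum_comm |>.trans ?_
        refine sum_congr rfl fun j _ => sum_congr rfl fun r _ => sum_congr rfl fun i _ => ?_
        ring
    _ = _ := by simp_rw [sum_mul, mul_sum]

theorem mul_binomialResidueMass (hζ : IsPrimitiveRoot ζ b) {a : ℕ} (hab : a ≤ b) (k : ℕ)
    (x : K) :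
    b * binomialResidueMass b a k x =
      ∑ j ∈ range b, (∑ r ∈ range a, ((ζ ^ j) ^ r)⁻¹) * (x * ζ ^ j + (1 - x)) ^ k := by
  rw [binomialResidueMass, hζ.mul_sum_filter_mod_lt hab]
  refine sum_congr rfl fun j _ => ?_
  rw [add_pow]
  exact congrArg _ (sum_congr rfl fun i _ => by ring)

end IsPrimitiveRoot

theorem Complex.normSq_ofReal_mul_add_one_sub {z : ℂ} (hz : ‖z‖ = 1) (x : ℝ) :
    Complex.normSq (x * z + (1 - x)) = 1 - x * (1 - x) * Complex.normSq (1 - z) := by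
  have hz' : z.re * z.re + z.im * z.im = 1 := by
    rw [← Complex.normSq_apply, Complex.normSq_eq_norm_sq, hz, one_pow]
  simp only [Complex.normSq_apply, Complex.add_re, Complex.add_im, Complex.mul_re,
    Complex.mul_im, Complex.sub_re, Complex.sub_im, Complex.one_re, Complex.one_im,
    Complex.ofReal_re, Complex.ofReal_im]
  linear_combination x * hz'

theorem IsPrimitiveRoot.exists_norm_mul_pow_add_one_sub_le {ζ : ℂ} {b : ℕ}
    (hζ : IsPrimitiveRoot ζ b) (hb : 1 < b) {δ : ℝ} (hδ : 0 < δ) :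
    ∃ ρ < 1, 0 ≤ ρ ∧ ∀ j, 0 < j → j < b → ∀ x ∈ Set.Ioo δ (1 - δ),
      ‖(x : ℂ) * ζ ^ j + (1 - x)‖ ≤ ρ := by
  obtain ⟨j₀, hj₀, hmin⟩ := (Ioo 0 b).exists_min_image (fun j => Complex.normSq (1 - ζ ^ j))
    ⟨1, mem_Ioo.2 ⟨one_pos, hb⟩⟩
  obtain ⟨hj₀0, hj₀b⟩ := mem_Ioo.1 hj₀
  set ε := Complex.normSq (1 - ζ ^ j₀)
  have hε : 0 < ε :=
    Complex.normSq_pos.2 (sub_ne_zero.2 (hζ.pow_ne_one_of_pos_of_lt hj₀0.ne' hj₀b).symm)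
  refine ⟨√(1 - δ ^ 2 * ε), ?_, Real.sqrt_nonneg _, fun j hj0 hjb x hx => ?_⟩
  · rw [Real.sqrt_lt' one_pos]
    nlinarith [mul_pos (pow_pos hδ 2) hε]
  · have hz : ‖ζ ^ j‖ = 1 := by rw [norm_pow, hζ.norm'_eq_one (by omega), one_pow]
    have hδx : δ ^ 2 ≤ x * (1 - x) := by nlinarith [hx.1, hx.2]
    have hεj : ε ≤ Complex.normSq (1 - ζ ^ j) := hmin j (mem_Ioo.2 ⟨hj0, hjb⟩)
    rw [Complex.norm_def, Complex.normSq_ofReal_mul_add_one_sub hz]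
    refine Real.sqrt_le_sqrt (sub_le_sub_left ?_ 1)
    exact mul_le_mul hδx hεj hε.le ((pow_nonneg hδ.le 2).trans hδx)

theorem abs_binomialResidueMass_sub_le {ζ : ℂ} {a b : ℕ} (hζ : IsPrimitiveRoot ζ b) (hb : 0 < b)
    (hab : a ≤ b) {x ρ : ℝ} (hρ₀ : 0 ≤ ρ)
    (hρ : ∀ j, 0 < j → j < b → ‖(x : ℂ) * ζ ^ j + (1 - x)‖ ≤ ρ) (k : ℕ) :
    |binomialResidueMass b a k x - a / b| ≤ a * ρ ^ k := by
  obtain ⟨n, rfl⟩ : ∃ n, b = n + 1 := ⟨b - 1, by omega⟩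
  have hfourier := hζ.mul_binomialResidueMass hab k (x : ℂ)
  rw [sum_range_succ'] at hfourier
  simp only [pow_zero, one_pow, inv_one, sum_const, card_range, nsmul_eq_mul, mul_one,
    add_sub_cancel] at hfourier
  set T := ∑ j ∈ range n, (∑ r ∈ range a, ((ζ ^ (j + 1)) ^ r)⁻¹) * (x * ζ ^ (j + 1) + (1 - x)) ^ k
  have hcoeff (j : ℕ) : ‖∑ r ∈ range a, ((ζ ^ j) ^ r)⁻¹‖ ≤ a := by
    calc ‖∑ r ∈ range a, ((ζ ^ j) ^ r)⁻¹‖ ≤ ∑ r ∈ range a, (1 : ℝ) :=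
          norm_sum_le_of_le _ fun r _ => le_of_eq <| by
            rw [norm_inv, norm_pow, norm_pow, hζ.norm'_eq_one n.succ_ne_zero, one_pow, one_pow,
              inv_one]
      _ = a := by simp
  have hT : ‖T‖ ≤ n * (a * ρ ^ k) := by
    refine (norm_sum_le_of_le (n := fun _ => a * ρ ^ k) _ fun j hj => ?_).trans (by simp)
    rw [norm_mul, norm_pow]
    exact mul_le_mul (hcoeff _)
      (pow_le_pow_left₀ (norm_nonneg _) (hρ _ j.succ_pos (by simpa using hj)) k)
      (by positivity) (Nat.cast_nonneg a)
  have hdiff : (((n + 1 : ℝ) * (binomialResidueMass (n + 1) a k x - a / (n + 1)) : ℝ) : ℂ) = T := by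
    have hcast : ((binomialResidueMass (n + 1) a k x : ℝ) : ℂ) =
        binomialResidueMass (n + 1) a k (x : ℂ) := by
      simp [binomialResidueMass]
    push_cast
    rw [hcast]
    push_cast at hfourier
    field_simp
    linear_combination hfourier
  have hn : (0 : ℝ) < n + 1 := by positivity
  refine le_of_mul_le_mul_left ?_ hn
  calc (n + 1 : ℝ) * |binomialResidueMass (n + 1) a k x - a / ↑(n + 1)| = ‖T‖ := by
        rw [← hdiff, Complex.norm_real, Real.norm_eq_abs, abs_mul, abs_of_pos hn, Nat.cast_succ]
    _ ≤ n * (a * ρ ^ k) := hT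
    _ ≤ (n + 1) * (a * ρ ^ k) := by gcongr; linarith

theorem binomialResidueMass_mem_Icc (b a k : ℕ) {x : ℝ} (hx : x ∈ Set.Icc 0 1) :
    binomialResidueMass b a k x ∈ Set.Icc 0 1 := by
  have hterm (i : ℕ) : 0 ≤ (k.choose i : ℝ) * x ^ i * (1 - x) ^ (k - i) := by
    have := sub_nonneg.2 hx.2
    have := hx.1
    positivity
  refine ⟨sum_nonneg fun i _ => hterm i, ?_⟩
  calc binomialResidueMass b a k x
      ≤ ∑ i ∈ range (k + 1), (k.choose i : ℝ) * x ^ i * (1 - x) ^ (k - i) :=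
        sum_le_sum_of_subset_of_nonneg (filter_subset _ _) fun i _ _ => hterm i
    _ = (x + (1 - x)) ^ k := by
        rw [add_pow]
        exact sum_congr rfl fun i _ => by ring
    _ = 1 := by rw [add_sub_cancel, one_pow]

theorem exists_pos_min_le_exp_neg_mul {m C ρ : ℝ} (hm : m < 1) (hρ₀ : 0 ≤ ρ) (hρ : ρ < 1) :
    ∃ lam > 0, ∀ k : ℕ, min m (C * ρ ^ k) ≤ Real.exp (-lam * k) := by
  set q := max ρ (1 / 2)
  have hq₀ : 0 < q := lt_max_of_lt_right one_half_pos
  have hq : q < 1 := max_lt hρ one_half_lt_one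
  set m' := max m (1 / 2)
  have hm'₀ : 0 < m' := lt_max_of_lt_right one_half_pos
  have hm' : m' < 1 := max_lt hm one_half_lt_one
  set C' := max C 1
  have hC' : 0 ≤ Real.log C' := Real.log_nonneg (le_max_right _ _)
  set c := -Real.log q with hc_def
  have hc : 0 < c := neg_pos.2 (Real.log_neg hq₀ hq)
  set L := -Real.log m'
  have hL : 0 < L := neg_pos.2 (Real.log_neg hm'₀ hm')
  obtain ⟨N, hN⟩ := exists_nat_gt (2 * Real.log C' / c)
  have hN₀ : (0 : ℝ) < N := (div_nonneg (by positivity) hc.le).trans_lt hN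
  refine ⟨min (c / 2) (L / N), by positivity, fun k => ?_⟩
  rcases le_total (N : ℝ) k with hk | hk
  · have hlogC : 2 * Real.log C' < c * k := by
      rw [div_lt_iff₀ hc] at hN
      nlinarith
    calc min m (C * ρ ^ k) ≤ C' * q ^ k :=
          (min_le_right _ _).trans <| mul_le_mul (le_max_left _ _)
            (pow_le_pow_left₀ hρ₀ (le_max_left _ _) k) (by positivity) (by positivity)
      _ = Real.exp (Real.log C' - c * k) := by
          rw [hc_def, neg_mul, sub_neg_eq_add, Real.exp_add, Real.exp_log (by positivity),
            mul_comm (Real.log q), Real.exp_nat_mul, Real.exp_log hq₀]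
      _ ≤ Real.exp (-min (c / 2) (L / N) * k) := by
          gcongr
          nlinarith [min_le_left (c / 2) (L / N), (Nat.cast_nonneg k : (0 : ℝ) ≤ k)]
  · calc min m (C * ρ ^ k) ≤ m' := (min_le_left _ _).trans (le_max_left _ _)
      _ = Real.exp (-L) := by rw [neg_neg, Real.exp_log hm'₀]
      _ ≤ Real.exp (-min (c / 2) (L / N) * k) := by
          gcongr
          have := mul_le_mul (min_le_right (c / 2) (L / N)) hk (Nat.cast_nonneg k) (by positivity)
          rw [div_mul_cancel₀ _ hN₀.ne'] at this
          linarith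

theorem stmt_4_general (δ : ℝ) (hδ : 0 < δ) (a b : ℕ) (ha : 0 < a) (hab : a < b) :
    ∃ lam > (0:ℝ), ∀ k : ℕ, 1 ≤ k → ∀ x ∈ Set.Ioo δ (1-δ),
      |(∑ i ∈ (Finset.range (k+1)).filter (fun i => i % b < a),
          (k.choose i : ℝ) * x^i * (1-x)^(k-i)) - a/b|
        ≤ Real.exp (-lam * k) := by
  have hb : 0 < b := ha.trans hab
  have hζ := Complex.isPrimitiveRoot_exp b hb.ne'
  obtain ⟨ρ, hρ, hρ₀, hρx⟩ := hζ.exists_norm_mul_pow_add_one_sub_le (by omega) hδ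
  have hab₀ : 0 < (a : ℝ) / b := by positivity
  have hab₁ : (a : ℝ) / b < 1 := (div_lt_one (by positivity)).2 (by exact_mod_cast hab)
  have hm : max (1 - (a : ℝ) / b) (a / b - 0) < 1 := max_lt (by linarith) (by linarith)
  obtain ⟨lam, hlam, hexp⟩ := exists_pos_min_le_exp_neg_mul (C := a) hm hρ₀ hρ
  refine ⟨lam, hlam, fun k _ x hx => (le_min ?_ ?_).trans (hexp k)⟩
  · have hx' : x ∈ Set.Icc 0 1 := ⟨by linarith [hx.1], by linarith [hx.2]⟩
    obtain ⟨h0, h1⟩ := binomialResidueMass_mem_Icc b a k hx'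
    exact abs_sub_le_max_sub h0 h1 _
  · exact abs_binomialResidueMass_sub_le hζ hb hab.le hρ₀ (fun j hj hjb => hρx j hj hjb x hx) k

theorem stmt_4 (δ : ℝ) (hδ : 0 < δ) (hδ' : δ < 1/2) (a b : ℕ) (ha : 0 < a) (hab : a < b) :
    ∃ lam > (0:ℝ), ∀ k : ℕ, 1 ≤ k → ∀ x ∈ Set.Ioo δ (1-δ),
      |(∑ i ∈ (Finset.range (k+1)).filter (fun i => i % b < a),
          (k.choose i : ℝ) * x^i * (1-x)^(k-i)) - a/b|
        ≤ Real.exp (-lam * k) :=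
  stmt_4_general δ hδ a b ha hab
end

section
/- Suppose p, q, k are positive integers with gcd(p,q) = 1, p ≥ 2, and E ⊆ {0,...,k} satisfies Σ_{i∈E} C(k,i) p^i (q-p)^{k-i} = p·q^{k-1}. Then 1 ∈ E and k ≡ 1 (mod p). -/
theorem stmt_8 (p q k : ℕ) (hp : 2 ≤ p) (hq : 0 < q) (hk : 0 < k)
    (hpq : Nat.gcd p q = 1) (E : Finset ℕ) (hE : E ⊆ Finset.range (k+1))
    (hsum : ∑ i ∈ E, (k.choose i : ℤ) * (p:ℤ)^i * ((q:ℤ)-p)^(k-i)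
        = (p:ℤ) * (q:ℤ)^(k-1)) :
    1 ∈ E ∧ (p:ℤ) ∣ (k:ℤ) - 1 := by
  set r : ℤ := (q:ℤ) - p with hr
  set f : ℕ → ℤ := fun i => (k.choose i : ℤ) * (p:ℤ)^i * r^(k-i) with hf
  have hpz : (p:ℤ) ≠ 0 := by positivity
  have hqr : ∀ m : ℕ, (p:ℤ) ∣ (q:ℤ)^m - r^m := by
    intro m
    have : (q:ℤ) - r = p := by ring
    calc (p:ℤ) = (q:ℤ) - r := this.symm
      _ ∣ (q:ℤ)^m - r^m := sub_dvd_pow_sub_pow _ _ m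
  have key : ∀ m : ℕ, ¬ ((p:ℤ) ∣ (q:ℤ)^m) := by
    intro m hm
    have hn : p ∣ q^m := by exact_mod_cast hm
    have h1 : p ∣ Nat.gcd p (q^m) := Nat.dvd_gcd dvd_rfl hn
    rw [Nat.Coprime.pow_right m hpq] at h1
    have := Nat.dvd_one.mp h1
    omega
  have h0 : 0 ∉ E := by
    intro h0
    have hsplit : f 0 + ∑ i ∈ E.erase 0, f i = ∑ i ∈ E, f i :=
      Finset.add_sum_erase E f h0
    have hdvd : (p:ℤ) ∣ ∑ i ∈ E.erase 0, f i := by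
      apply Finset.dvd_sum
      intro i hi
      have hi0 : i ≠ 0 := Finset.ne_of_mem_erase hi
      exact Dvd.dvd.mul_right (Dvd.dvd.mul_left (dvd_pow_self _ hi0) _) _
    have hf0 : f 0 = r^k := by simp [hf]
    have hrk : (p:ℤ) ∣ r^k := by
      have : r^k = (p:ℤ) * (q:ℤ)^(k-1) - ∑ i ∈ E.erase 0, f i := by
        rw [← hsum, ← hsplit, hf0]; ring
      rw [this]
      exact dvd_sub (Dvd.intro _ rfl) hdvd
    exact key k (by have := dvd_add (hqr k) hrk; simpa using this)
  -- everything in E.erase 1 is ≥ 2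
  have hdvd2 : (p:ℤ)^2 ∣ ∑ i ∈ E.erase 1, f i := by
    apply Finset.dvd_sum
    intro i hi
    have hi1 : i ≠ 1 := Finset.ne_of_mem_erase hi
    have hiE : i ∈ E := Finset.mem_of_mem_erase hi
    have hi0 : i ≠ 0 := fun h => h0 (h ▸ hiE)
    have h2i : 2 ≤ i := by omega
    have : (p:ℤ)^2 ∣ (p:ℤ)^i := pow_dvd_pow _ h2i
    exact Dvd.dvd.mul_right (Dvd.dvd.mul_left this _) _
  by_cases h1 : 1 ∈ E
  · refine ⟨h1, ?_⟩
    have hsplit : f 1 + ∑ i ∈ E.erase 1, f i = ∑ i ∈ E, f i :=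
      Finset.add_sum_erase E f h1
    have hf1 : f 1 = (k:ℤ) * (p:ℤ) * r^(k-1) := by
      simp [hf, Nat.choose_one_right]
    have hstep : (p:ℤ)^2 ∣ (p:ℤ) * ((q:ℤ)^(k-1) - (k:ℤ) * r^(k-1)) := by
      have : (p:ℤ) * ((q:ℤ)^(k-1) - (k:ℤ) * r^(k-1))
          = ∑ i ∈ E.erase 1, f i := by
        have := hsplit
        rw [hsum] at this
        rw [hf1] at this
        linarith
      rw [this]; exact hdvd2
    have hcancel : (p:ℤ) ∣ (q:ℤ)^(k-1) - (k:ℤ) * r^(k-1) := by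
      rw [pow_two] at hstep
      exact (mul_dvd_mul_iff_left hpz).mp hstep
    have hcomb : (p:ℤ) ∣ (q:ℤ)^(k-1) * (1 - (k:ℤ)) := by
      have h2 := hqr (k-1)
      have : (q:ℤ)^(k-1) * (1 - (k:ℤ))
          = ((q:ℤ)^(k-1) - (k:ℤ) * r^(k-1)) - (k:ℤ) * ((q:ℤ)^(k-1) - r^(k-1)) := by
        ring
      rw [this]
      exact dvd_sub hcancel (Dvd.dvd.mul_left h2 _)
    have hco : IsCoprime (p:ℤ) ((q:ℤ)^(k-1)) := by
      have : IsCoprime (p:ℤ) (q:ℤ) := Nat.isCoprime_iff_coprime.mpr hpq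
      exact this.pow_right
    have : (p:ℤ) ∣ 1 - (k:ℤ) := hco.dvd_of_dvd_mul_left hcomb
    exact (dvd_sub_comm).mp this
  · exfalso
    have heq : E.erase 1 = E := Finset.erase_eq_of_notMem h1
    rw [heq, hsum, pow_two] at hdvd2
    have : (p:ℤ) ∣ (q:ℤ)^(k-1) := (mul_dvd_mul_iff_left hpz).mp hdvd2
    exact key (k-1) this
end

section
/- Fix k ≥ 1 and E ⊆ {0,...,k}. For n ≥ k and y = j/n with 0 ≤ j ≤ n, define b^{(n)}(y) = Σ_{i=0}^k (k·1_{i∈E} - i)·[C(ny,i)·C(n-ny,k-i)/C(n,k)] and b(y) = Σ_{i=0}^k (k·1_{i∈E} - i)·C(k,i)·y^i·(1-y)^{k-i}. Then there exists a constant c depending only on k and E such that sup_{j} |b^{(n)}(j/n) - b(j/n)| ≤ c/n. -/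
/-!
The hypergeometric weight `C(j,i) C(n-j,k-i) / C(n,k)` is `C(k,i)` times a product of `k` ratios
`(j-l)/(n-l)` and `(n-j-l)/(n-i-l)`, and the binomial weight is `C(k,i)` times the product of their
limits `j/n` and `(n-j)/n`. All these factors lie in `[0,1]` and each ratio is within `k²/n` of its
limit, so the two products are within `k³/n`. When `i > j` or `k-i > n-j` the hypergeometric weight
vanishes, and the binomial weight is then at most `C(k,i) k/n`. Summing over `i` with coefficients
bounded by `k` gives the constant `k⁴ 2ᵏ`.
-/

open Finset

theorem norm_prod_sub_prod_le_sum_norm_sub {ι R : Type*} [NormedCommRing R] [NormOneClass R]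
    (s : Finset ι) {f g : ι → R} (hf : ∀ i ∈ s, ‖f i‖ ≤ 1) (hg : ∀ i ∈ s, ‖g i‖ ≤ 1) :
    ‖∏ i ∈ s, f i - ∏ i ∈ s, g i‖ ≤ ∑ i ∈ s, ‖f i - g i‖ := by
  classical
  induction s using Finset.induction_on with
  | empty => simp
  | insert a s ha ih =>
    rw [forall_mem_insert] at hf hg
    obtain ⟨hfa, hf⟩ := hf
    obtain ⟨-, hg⟩ := hg
    have hgs : ‖∏ i ∈ s, g i‖ ≤ 1 :=
      (norm_prod_le s g).trans (prod_le_one (fun _ _ => norm_nonneg _) hg)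
    have hrest := ih hf hg
    rw [prod_insert ha, prod_insert ha, sum_insert ha]
    calc ‖f a * ∏ i ∈ s, f i - g a * ∏ i ∈ s, g i‖
        = ‖f a * (∏ i ∈ s, f i - ∏ i ∈ s, g i) + (f a - g a) * ∏ i ∈ s, g i‖ := by ring_nf
      _ ≤ ‖f a‖ * ‖∏ i ∈ s, f i - ∏ i ∈ s, g i‖ + ‖f a - g a‖ * ‖∏ i ∈ s, g i‖ :=
        (norm_add_le _ _).trans (add_le_add (norm_mul_le _ _) (norm_mul_le _ _))
      _ ≤ 1 * ∑ i ∈ s, ‖f i - g i‖ + ‖f a - g a‖ * 1 := by gcongr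
      _ = ‖f a - g a‖ + ∑ i ∈ s, ‖f i - g i‖ := by ring

theorem abs_sub_div_sub_sub_div_le {b d m k n : ℝ} (hd : 0 ≤ d) (hdm : d ≤ m) (hmk : m + 1 ≤ k)
    (hkn : k ≤ n) (hb : 0 ≤ b) (hbn : b ≤ n) : |(b - d) / (n - m) - b / n| ≤ k ^ 2 / n := by
  have hn : 0 < n := by linarith
  have hnm : 0 < n - m := by linarith
  -- `k * (n - m) - n ≥ (k - 1) * (n - k) ≥ 0`
  have hn_le : n ≤ k * (n - m) := by nlinarith
  rw [div_sub_div _ _ hnm.ne' hn.ne', abs_div, abs_of_pos (mul_pos hnm hn),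
    div_le_div_iff₀ (mul_pos hnm hn) hn]
  have hnum : |(b - d) * n - (n - m) * b| ≤ m * n := by
    rw [abs_le]; constructor <;> nlinarith
  calc |(b - d) * n - (n - m) * b| * n ≤ m * n * n := by gcongr
    _ ≤ m * (k * (n - m)) * n := by gcongr; linarith
    _ ≤ k ^ 2 * ((n - m) * n) := by
      nlinarith [mul_nonneg (mul_nonneg (by linarith : 0 ≤ k - m) (by linarith : 0 ≤ k))
        (mul_pos hnm hn).le]

theorem choose_mul_choose_div_choose_eq_mul_prod (j m : ℕ) {n i r : ℕ} (hn : i + r ≤ n) :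
    (j.choose i : ℝ) * (m.choose r : ℝ) / (n.choose (i + r) : ℝ) =
      (i + r).choose i * ((∏ l ∈ range i, ((j : ℝ) - l) / (n - l)) *
        ∏ l ∈ range r, ((m : ℝ) - l) / (n - (i + l))) := by
  have hdesc (a b : ℕ) : ∏ l ∈ range b, ((a : ℝ) - l) = b.factorial * a.choose b := by
    rw [prod_range_natCast_sub, ← Nat.descFactorial_eq_prod_range,
      Nat.descFactorial_eq_factorial_mul_choose, Nat.cast_mul]
  have hsplit : (∏ l ∈ range i, ((n : ℝ) - l)) * ∏ l ∈ range r, ((n : ℝ) - (i + l)) =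
      (i + r).factorial * n.choose (i + r) := by
    rw [← hdesc, prod_range_add]; push_cast; rfl
  have hfact : ((i + r).choose i : ℝ) * i.factorial * r.factorial = (i + r).factorial := by
    rw [Nat.choose_symm_add]; exact_mod_cast Nat.add_choose_mul_factorial_mul_factorial i r
  have hchoose : (n.choose (i + r) : ℝ) ≠ 0 := by exact_mod_cast (Nat.choose_pos hn).ne'
  have hchoose' : ((i + r).choose i : ℝ) ≠ 0 := by exact_mod_cast (Nat.choose_pos (by omega)).ne'
  rw [prod_div_distrib, prod_div_distrib, div_mul_div_comm, hsplit, hdesc, hdesc, ← hfact]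
  field_simp

theorem abs_div_le_one_of_le {a c : ℝ} (ha : 0 ≤ a) (hac : a ≤ c) : |a / c| ≤ 1 := by
  rw [abs_of_nonneg (div_nonneg ha (ha.trans hac))]
  exact div_le_one_of_le₀ hac (ha.trans hac)

theorem abs_choose_mul_choose_div_choose_sub_le_of_le {n i r j : ℕ} (hn : i + r ≤ n)
    (hjn : j ≤ n) (hij : i ≤ j) (hrj : r ≤ n - j) :
    |(j.choose i : ℝ) * ((n - j).choose r : ℝ) / (n.choose (i + r) : ℝ) -
      (i + r).choose i * ((j : ℝ) / n) ^ i * (((n : ℝ) - j) / n) ^ r| ≤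
      (i + r).choose i * (i + r) ^ 3 / n := by
  rw [choose_mul_choose_div_choose_eq_mul_prod j (n - j) hn, Nat.cast_sub hjn,
    mul_assoc _ (_ ^ i), ← mul_sub, abs_mul, Nat.abs_cast, mul_div_assoc]
  gcongr
  have hn' : (i : ℝ) + r ≤ n := by exact_mod_cast hn
  have hjn' : (j : ℝ) ≤ n := by exact_mod_cast hjn
  have hij' : (i : ℝ) ≤ j := by exact_mod_cast hij
  have hrj' : (r : ℝ) ≤ n - j := by rw [← Nat.cast_sub hjn]; exact_mod_cast hrj
  set F : ℕ ⊕ ℕ → ℝ := Sum.elim (fun l => ((j : ℝ) - l) / (n - l))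
    (fun l => ((n : ℝ) - j - l) / (n - (i + l)))
  set G : ℕ ⊕ ℕ → ℝ := Sum.elim (fun _ => (j : ℝ) / n) (fun _ => ((n : ℝ) - j) / n)
  set s := (range i).disjSum (range r)
  have hprod : (∏ l ∈ range i, ((j : ℝ) - l) / (n - l)) *
        ∏ l ∈ range r, ((n : ℝ) - j - l) / (n - (i + l)) -
      ((j : ℝ) / n) ^ i * (((n : ℝ) - j) / n) ^ r = ∏ x ∈ s, F x - ∏ x ∈ s, G x := by
    simp only [s, F, G, prod_disjSum, Sum.elim_inl, Sum.elim_inr, prod_const, card_range]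
  have hF : ∀ x ∈ s, ‖F x‖ ≤ 1 := by
    rintro (l | l) hl <;> rw [Real.norm_eq_abs] <;>
      simp only [s, inl_mem_disjSum, inr_mem_disjSum, mem_range] at hl
    · have hl' : (l : ℝ) + 1 ≤ i := by exact_mod_cast hl
      exact abs_div_le_one_of_le (by linarith) (by linarith)
    · have hl' : (l : ℝ) + 1 ≤ r := by exact_mod_cast hl
      exact abs_div_le_one_of_le (by linarith) (by linarith)
  have hG : ∀ x ∈ s, ‖G x‖ ≤ 1 := by
    rintro (l | l) - <;> rw [Real.norm_eq_abs]
    · exact abs_div_le_one_of_le (Nat.cast_nonneg _) hjn'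
    · exact abs_div_le_one_of_le (by linarith) (by linarith)
  have hFG : ∀ x ∈ s, |F x - G x| ≤ (i + r) ^ 2 / n := by
    rintro (l | l) hl <;> simp only [s, inl_mem_disjSum, inr_mem_disjSum, mem_range] at hl
    · have hl' : (l : ℝ) + 1 ≤ i := by exact_mod_cast hl
      exact abs_sub_div_sub_sub_div_le (Nat.cast_nonneg l) le_rfl (by linarith) hn'
        (Nat.cast_nonneg j) hjn'
    · have hl' : (l : ℝ) + 1 ≤ r := by exact_mod_cast hl
      exact abs_sub_div_sub_sub_div_le (Nat.cast_nonneg l) (by linarith) (by linarith) hn'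
        (by linarith) (by linarith)
  rw [hprod]
  calc |∏ x ∈ s, F x - ∏ x ∈ s, G x| ≤ ∑ x ∈ s, |F x - G x| :=
        norm_prod_sub_prod_le_sum_norm_sub s hF hG
    _ ≤ ∑ x ∈ s, ((i + r) ^ 2 / n : ℝ) := sum_le_sum hFG
    _ = (i + r) ^ 3 / n := by simp [s]; ring

theorem div_pow_mul_sub_div_pow_le_of_lt {n i r j : ℕ} (hjn : j ≤ n) (h : j < i ∨ n - j < r) :
    ((j : ℝ) / n) ^ i * (((n : ℝ) - j) / n) ^ r ≤ (i + r) / n := by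
  have hjn' : (j : ℝ) ≤ n := by exact_mod_cast hjn
  have hx0 : 0 ≤ (j : ℝ) / n := by positivity
  have hx1 : (j : ℝ) / n ≤ 1 := div_le_one_of_le₀ hjn' (Nat.cast_nonneg n)
  have hy0 : 0 ≤ ((n : ℝ) - j) / n := div_nonneg (by linarith) (Nat.cast_nonneg n)
  have hy1 : ((n : ℝ) - j) / n ≤ 1 := div_le_one_of_le₀ (by linarith) (Nat.cast_nonneg n)
  rcases h with h | h
  · have hj : (j : ℝ) ≤ i + r := by exact_mod_cast (h.le.trans (Nat.le_add_right i r))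
    calc ((j : ℝ) / n) ^ i * (((n : ℝ) - j) / n) ^ r ≤ (j : ℝ) / n :=
          mul_le_of_le_one_right (by positivity) (pow_le_one₀ hy0 hy1) |>.trans
            (pow_le_of_le_one hx0 hx1 (by omega))
      _ ≤ (i + r) / n := by gcongr
  · have hj : (n : ℝ) - j ≤ i + r := by
      rw [← Nat.cast_sub hjn]; exact_mod_cast (h.le.trans (Nat.le_add_left r i))
    calc ((j : ℝ) / n) ^ i * (((n : ℝ) - j) / n) ^ r ≤ ((n : ℝ) - j) / n :=
          mul_le_of_le_one_left (by positivity) (pow_le_one₀ hx0 hx1) |>.trans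
            (pow_le_of_le_one hy0 hy1 (by omega))
      _ ≤ (i + r) / n := by gcongr

theorem abs_choose_mul_choose_div_choose_sub_le {n k i j : ℕ} (hik : i ≤ k) (hkn : k ≤ n)
    (hjn : j ≤ n) :
    |(j.choose i : ℝ) * ((n - j).choose (k - i) : ℝ) / (n.choose k : ℝ) -
      (k.choose i : ℝ) * ((j : ℝ) / n) ^ i * (1 - (j : ℝ) / n) ^ (k - i)| ≤
      k.choose i * k ^ 3 / n := by
  rcases Nat.eq_zero_or_pos n with rfl | hn
  · simp_all
  obtain ⟨r, rfl⟩ := Nat.exists_eq_add_of_le hik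
  have hy : 1 - (j : ℝ) / n = ((n : ℝ) - j) / n := by field_simp
  rw [Nat.add_sub_cancel_left, hy]
  push_cast
  by_cases h : i ≤ j ∧ r ≤ n - j
  · exact abs_choose_mul_choose_div_choose_sub_le_of_le hkn hjn h.1 h.2
  · have hzero : (j.choose i : ℝ) * ((n - j).choose r : ℝ) = 0 := by
      rcases not_and_or.mp h with h | h <;> simp [Nat.choose_eq_zero_of_lt (not_le.mp h)]
    have hy0 : 0 ≤ ((n : ℝ) - j) / n := div_nonneg (by simpa using hjn) (Nat.cast_nonneg n)
    rw [hzero, zero_div, zero_sub, abs_neg, abs_of_nonneg (by positivity), mul_assoc,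
      mul_div_assoc]
    gcongr
    calc ((j : ℝ) / n) ^ i * (((n : ℝ) - j) / n) ^ r ≤ (i + r) / n :=
          div_pow_mul_sub_div_pow_le_of_lt hjn (by omega)
      _ ≤ (i + r) ^ 3 / n := by
          gcongr; exact_mod_cast Nat.le_self_pow three_ne_zero (i + r)

theorem stmt_15_general (k : ℕ) (E : Finset ℕ) :
    ∃ c : ℝ, ∀ n : ℕ, k ≤ n → ∀ j : ℕ, j ≤ n →
      |(∑ i ∈ Finset.range (k+1),
          ((k:ℝ) * (if i ∈ E then 1 else 0) - i) *
            ((j.choose i : ℝ) * ((n-j).choose (k-i) : ℝ) / (n.choose k : ℝ))) -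
        (∑ i ∈ Finset.range (k+1),
          ((k:ℝ) * (if i ∈ E then 1 else 0) - i) *
            ((k.choose i : ℝ) * ((j:ℝ)/n)^i * (1-(j:ℝ)/n)^(k-i)))|
        ≤ c / n := by
  refine ⟨k ^ 4 * 2 ^ k, fun n hkn j hjn => ?_⟩
  rw [← sum_sub_distrib]
  refine (abs_sum_le_sum_abs _ _).trans <|
    (sum_le_sum (g := fun i => (k : ℝ) * (k.choose i * k ^ 3 / n)) fun i hi => ?_).trans_eq ?_
  · have hik : i ≤ k := Nat.lt_succ_iff.mp (mem_range.mp hi)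
    have hcoef : |(k : ℝ) * (if i ∈ E then 1 else 0) - i| ≤ k := by
      have : (i : ℝ) ≤ k := by exact_mod_cast hik
      rw [abs_le]; constructor <;> split_ifs <;> linarith [(Nat.cast_nonneg i : (0 : ℝ) ≤ i)]
    rw [← mul_sub, abs_mul]
    exact mul_le_mul hcoef (abs_choose_mul_choose_div_choose_sub_le hik hkn hjn) (abs_nonneg _)
      (Nat.cast_nonneg k)
  · rw [← mul_sum, ← sum_div, ← sum_mul, ← Nat.cast_sum, Nat.sum_range_choose]
    push_cast
    ring

theorem stmt_15 (k : ℕ) (hk : 1 ≤ k) (E : Finset ℕ) (hE : E ⊆ Finset.range (k+1)) :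
    ∃ c : ℝ, ∀ n : ℕ, k ≤ n → ∀ j : ℕ, j ≤ n →
      |(∑ i ∈ Finset.range (k+1),
          ((k:ℝ) * (if i ∈ E then 1 else 0) - i) *
            ((j.choose i : ℝ) * ((n-j).choose (k-i) : ℝ) / (n.choose k : ℝ))) -
        (∑ i ∈ Finset.range (k+1),
          ((k:ℝ) * (if i ∈ E then 1 else 0) - i) *
            ((k.choose i : ℝ) * ((j:ℝ)/n)^i * (1-(j:ℝ)/n)^(k-i)))|
        ≤ c / n :=
  stmt_15_general k E
end
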